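/- Let g, gᵢ, Δᵢ, dᵢ be integers with g ≥ 2, gᵢ ≥ 0, Δᵢ ≥ 1, and dᵢ < 0. Assume: (1) the lower balancing bound (2gᵢ - 2 + Δᵢ)/(2g - 2) - Δᵢ/2 ≤ dᵢ holds in ℚ; (2) dᵢ ≤ 1 - Δᵢ; and (3) if gᵢ = 0 then Δᵢ ≥ 3. Then a contradiction follows; i.e., there exist no such integers. (This is the numerical core of the lemma that for a semistable curve X of genus g ≥ 2 and a balanced multidegree δ of total degree 1 with some negative entry, the Brill–Noether set W_δ(X) is empty: if some component Cᵢ of geometric genus gᵢ meeting the rest of the curve in Δᵢ nodes had dᵢ < 0 and W_δ(X) ≠ ∅, then a nonzero section would force dᵢ ≤ 1 - Δᵢ, while semistability excludes (gᵢ, Δᵢ) = (0, 1) and the rule that exceptional components carry degree 1 excludes (gᵢ, Δᵢ) = (0, 2) with dᵢ < 0.) -/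

import Mathlib

/-!
The number `2gᵢ - 2 + Δᵢ` is the degree of the dualizing sheaf on `Cᵢ`; it is positive unless
`gᵢ = 0` and `Δᵢ ≤ 2`, which semistability together with `dᵢ < 0` rules out. Then the lower
balancing bound gives `dᵢ > -Δᵢ / 2`, i.e. `2dᵢ + Δᵢ ≥ 1`, while `dᵢ ≤ 1 - Δᵢ` gives
`2dᵢ + Δᵢ ≤ dᵢ + 1 ≤ 0`.
-/

lemma dualizing_degree_pos {gi Δi : ℤ} (hgi : 0 ≤ gi) (hΔi : 1 ≤ Δi)
    (hsemi : gi = 0 → 3 ≤ Δi) : 0 < 2 * gi - 2 + Δi := by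
  rcases eq_or_ne gi 0 with h | h
  · have := hsemi h
    omega
  · omega

lemma two_mul_add_pos_of_balanced_lower {g gi Δi di : ℤ} (hg : 2 ≤ g)
    (hω : 0 < 2 * gi - 2 + Δi)
    (hlow : ((2 * gi - 2 + Δi : ℚ)) / (2 * g - 2) - (Δi : ℚ) / 2 ≤ (di : ℚ)) :
    0 < 2 * di + Δi := by
  have hden : (0 : ℚ) < 2 * g - 2 := by
    have : (2 : ℚ) ≤ g := by exact_mod_cast hg
    linarith
  have hnum : (0 : ℚ) < 2 * gi - 2 + Δi := by exact_mod_cast hω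
  have hquot := div_pos hnum hden
  have : (0 : ℚ) < 2 * di + Δi := by linarith
  exact_mod_cast this

theorem no_negative_entry_degree_one
    (g gi Δi di : ℤ) (hg : 2 ≤ g) (hgi : 0 ≤ gi) (hΔi : 1 ≤ Δi) (hdi : di < 0)
    (hlow : ((2 * gi - 2 + Δi : ℚ)) / (2 * g - 2) - (Δi : ℚ) / 2 ≤ (di : ℚ))
    (hup : di ≤ 1 - Δi)
    (hsemi : gi = 0 → 3 ≤ Δi) :
    False := by
  have hbal := two_mul_add_pos_of_balanced_lower hg (dualizing_degree_pos hgi hΔi hsemi) hlow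
  omega
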